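/- arXiv:1807.10809 — 4 statements merged into one kernel-verified Lean document; each statement's English description precedes it below -/
import Mathlib

section
/- For all real numbers x1 > 0, x2 > 0 and all real a, the inequality ((1-a)^2/2)(1 + 1/x1) + ((1+a)^2/2)(1 + 1/x2) - (1 + 2/(x1+x2)) ≥ a^2 holds. -/
/-!
Since `(1 - a) + (1 + a) = 2`, the inequality is the two-term Sedrakyan (Titu) inequality
`(1 - a)² / x₁ + (1 + a)² / x₂ ≥ 2² / (x₁ + x₂)` once the constant and `a²` terms cancel.
-/

theorem add_sq_div_add_le_add_sq_div {R : Type*} [Field R] [LinearOrder R] [IsStrictOrderedRing R]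
    (u v : R) {x y : R} (hx : 0 < x) (hy : 0 < y) :
    (u + v) ^ 2 / (x + y) ≤ u ^ 2 / x + v ^ 2 / y := by
  simpa [Fin.sum_univ_two] using
    Finset.sq_sum_div_le_sum_sq_div Finset.univ ![u, v] (g := ![x, y])
      (by simp [Fin.forall_fin_two, hx, hy])

theorem stmt_0 (x1 x2 a : ℝ) (hx1 : 0 < x1) (hx2 : 0 < x2) :
    (1 - a)^2 / 2 * (1 + 1 / x1) + (1 + a)^2 / 2 * (1 + 1 / x2)
      - (1 + 2 / (x1 + x2)) ≥ a^2 := by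
  have titu := add_sq_div_add_le_add_sq_div (1 - a) (1 + a) hx1 hx2
  have hsum : (1 - a + (1 + a)) ^ 2 / (x1 + x2) = 2 * (2 / (x1 + x2)) := by ring
  have hsplit : (1 - a)^2 / 2 * (1 + 1 / x1) + (1 + a)^2 / 2 * (1 + 1 / x2)
      = 1 + a ^ 2 + ((1 - a) ^ 2 / x1 + (1 + a) ^ 2 / x2) / 2 := by ring
  rw [hsplit]
  linarith
end

section
/- Let 2/3 < p ≤ 1 and define g̃(q) = 1 + p(2-p)/((3p-2)(3p-2q)) for q ∈ [0,1]. Then for all q1, q2 ∈ [0,1] and all real a, ((1-a)^2/2) g̃(q1) + ((1+a)^2/2) g̃(q2) - g̃((q1+q2)/2) ≥ a^2. -/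
/-! Since `(1 - a)² / 2 + (1 + a)² / 2 - 1 = a²`, the constant term `1` of `g̃` contributes exactly
`a²`, and what remains is `c / x` with `c = p(2-p)/(3p-2) ≥ 0` and `x = 3p - 2q > 0`, which is
affine in `q`. The claim thus reduces to `4 / (x₁ + x₂) ≤ (1 - a)² / x₁ + (1 + a)² / x₂`,
which is Titu's lemma for the two terms `1 - a` and `1 + a`. -/

/-- `gt' p q = 1 + p(2-p)/((3p-2)(3p-2q))` -/
noncomputable def gt' (p q : ℝ) : ℝ := 1 + p * (2 - p) / ((3 * p - 2) * (3 * p - 2 * q))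

theorem sq_add_div_add_le_sq_div_add_sq_div {R : Type*} [Semifield R] [LinearOrder R]
    [IsStrictOrderedRing R] [ExistsAddOfLE R] (u v : R) {x y : R} (hx : 0 < x) (hy : 0 < y) :
    (u + v) ^ 2 / (x + y) ≤ u ^ 2 / x + v ^ 2 / y := by
  simpa [Fin.sum_univ_two] using
    Finset.sq_sum_div_le_sum_sq_div Finset.univ ![u, v] (g := ![x, y])
      (by simp [Fin.forall_fin_two, hx, hy])

theorem sq_le_weighted_one_add_div {c x y : ℝ} (hc : 0 ≤ c) (hx : 0 < x) (hy : 0 < y) (a : ℝ) :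
    (1 - a) ^ 2 / 2 * (1 + c / x) + (1 + a) ^ 2 / 2 * (1 + c / y) - (1 + c / ((x + y) / 2))
      ≥ a ^ 2 := by
  have titu : (2 : ℝ) ^ 2 / (x + y) ≤ (1 - a) ^ 2 / x + (1 + a) ^ 2 / y := by
    simpa [sub_add_add_cancel, one_add_one_eq_two] using
      sq_add_div_add_le_sq_div_add_sq_div (1 - a) (1 + a) hx hy
  have excess :
      (1 - a) ^ 2 / 2 * (1 + c / x) + (1 + a) ^ 2 / 2 * (1 + c / y) - (1 + c / ((x + y) / 2))
        - a ^ 2 = c / 2 * ((1 - a) ^ 2 / x + (1 + a) ^ 2 / y - 2 ^ 2 / (x + y)) := by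
    field_simp
    ring
  have := mul_nonneg (div_nonneg hc zero_le_two) (sub_nonneg.mpr titu)
  linarith

theorem gt'_eq (p q : ℝ) : gt' p q = 1 + p * (2 - p) / (3 * p - 2) / (3 * p - 2 * q) := by
  rw [gt', div_div]

theorem stmt_1 (p : ℝ) (hp1 : 2 / 3 < p) (hp2 : p ≤ 1)
    (q1 q2 : ℝ) (hq1 : q1 ∈ Set.Icc (0:ℝ) 1) (hq2 : q2 ∈ Set.Icc (0:ℝ) 1) (a : ℝ) :
    (1 - a)^2 / 2 * gt' p q1 + (1 + a)^2 / 2 * gt' p q2 - gt' p ((q1 + q2) / 2) ≥ a^2 := by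
  have hc : 0 ≤ p * (2 - p) / (3 * p - 2) := by
    apply div_nonneg <;> nlinarith
  have hx1 : 0 < 3 * p - 2 * q1 := by linarith [hq1.2]
  have hx2 : 0 < 3 * p - 2 * q2 := by linarith [hq2.2]
  have hmid : 3 * p - 2 * ((q1 + q2) / 2) = ((3 * p - 2 * q1) + (3 * p - 2 * q2)) / 2 := by ring
  rw [gt'_eq, gt'_eq, gt'_eq, hmid]
  exact sq_le_weighted_one_add_div hc hx1 hx2 a
end

section
/- Let 2/3 < p ≤ 1 and define g on [0,1] by g(q) = 1 + p(2-p)/((3p-2)(3p-2q)) for q ≥ p and g(q) = g(p)·q/p for q ≤ p. Then g is convex on [0,1]. -/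
/-- `g p q` equals `gt' p q` for `q ≥ p` and is linear, `g(p)·q/p`, for `q ≤ p`. -/
noncomputable def g (p q : ℝ) : ℝ := if q ≤ p then gt' p p * q / p else gt' p q

/-!
Let `ℓ q = g̃(p) q / p`. It is the chord of `g̃` through `2p - 1` and `p`, so
`g̃ - ℓ = 4 (q - p) (q - (2p - 1)) / ((3p - 2) (3p - 2q))` vanishes at `p` and is nonnegative on
`[p, 1]`; hence `g = ℓ + (g̃ - ℓ) ∘ max · p`. Being a positive multiple of `(3p - 2q)⁻¹` plus a
constant, `g̃` is convex for `q < 3p/2`. A convex function on `[p, 1]` that is minimal at `p` is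
monotone there, so its composition with the convex map `max · p` is again convex.
-/

open Set

section
variable {𝕜 β : Type*} [Field 𝕜] [LinearOrder 𝕜] [IsStrictOrderedRing 𝕜]
  [AddCommMonoid β] [LinearOrder β] [IsOrderedCancelAddMonoid β] [Module 𝕜 β]
  [PosSMulStrictMono 𝕜 β] {f : 𝕜 → β}

theorem ConvexOn.monotoneOn_of_isLeast_of_isMinOn {s : Set 𝕜} {a : 𝕜} (hf : ConvexOn 𝕜 s f)
    (ha : IsLeast s a) (hmin : IsMinOn f s a) : MonotoneOn f s := by
  intro x hx y hy hxy
  obtain rfl | hax := (ha.2 hx).eq_or_lt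
  · exact hmin hy
  · exact hf.le_right_of_left_le'' ha.1 hy hax hxy (hmin hx)

theorem ConvexOn.comp_max_of_isMinOn {a b c : 𝕜} (hf : ConvexOn 𝕜 (Icc b c) f)
    (hmin : IsMinOn f (Icc b c) b) (hab : a ≤ b) (hbc : b ≤ c) :
    ConvexOn 𝕜 (Icc a c) fun x => f (max x b) := by
  have himage : (fun x => max x b) '' Icc a c = Icc b c := by
    ext y
    refine ⟨?_, fun hy => ⟨y, ⟨hab.trans hy.1, hy.2⟩, max_eq_left hy.1⟩⟩
    rintro ⟨x, hx, rfl⟩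
    exact ⟨le_max_right x b, max_le hx.2 hbc⟩
  have hmax : ConvexOn 𝕜 (Icc a c) fun x => max x b :=
    (convexOn_id (convex_Icc a c)).sup (convexOn_const b (convex_Icc a c))
  have hmono := hf.monotoneOn_of_isLeast_of_isMinOn (isLeast_Icc hbc) hmin
  rw [← himage] at hf hmono
  exact hf.comp hmax hmono

end

theorem convexOn_gt' {p : ℝ} (hp1 : 2 / 3 < p) (hp2 : p ≤ 2) :
    ConvexOn ℝ (Iio (3 * p / 2)) (gt' p) := by
  have hK : 0 ≤ p * (2 - p) / (3 * p - 2) := div_nonneg (by nlinarith) (by linarith)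
  have h := ((convexOn_zpow (𝕜 := ℝ) (-1)).comp_affineMap
    (AffineMap.lineMap (3 * p) (3 * p - 2))).smul hK
  have hpre : AffineMap.lineMap (3 * p) (3 * p - 2) ⁻¹' Ioi (0 : ℝ) = Iio (3 * p / 2) := by
    ext q
    simp only [mem_preimage, AffineMap.lineMap_apply_ring', mem_Ioi, mem_Iio]
    constructor <;> intro <;> linarith
  rw [hpre] at h
  refine (h.add_const 1).congr fun q _ => ?_
  simp only [gt', Function.comp_apply, AffineMap.lineMap_apply_ring', zpow_neg_one, smul_eq_mul,
    Pi.add_apply, div_eq_mul_inv, mul_inv]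
  ring

theorem gt'_sub_div_mul {p q : ℝ} (hp : 2 / 3 < p) (hq : q < 3 * p / 2) :
    gt' p q - gt' p p / p * q =
      4 * (q - p) * (q - (2 * p - 1)) / ((3 * p - 2) * (3 * p - 2 * q)) := by
  have : p ≠ 0 := by linarith
  have : p * 3 - 2 ≠ 0 := by linarith
  have : p * 3 - 2 * q ≠ 0 := by linarith
  rw [gt', gt', show 3 * p - 2 * p = p by ring]
  field_simp
  ring

theorem div_mul_le_gt' {p q : ℝ} (hp1 : 2 / 3 < p) (hp2 : p ≤ 1) (hq : p ≤ q)
    (hq' : q < 3 * p / 2) : gt' p p / p * q ≤ gt' p q := by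
  rw [← sub_nonneg, gt'_sub_div_mul hp1 hq']
  have : 0 ≤ q - p := by linarith
  have : 0 ≤ q - (2 * p - 1) := by linarith
  have : 0 < 3 * p - 2 := by linarith
  have : 0 < 3 * p - 2 * q := by linarith
  positivity

theorem stmt_4 (p : ℝ) (hp1 : 2 / 3 < p) (hp2 : p ≤ 1) :
    ConvexOn ℝ (Set.Icc (0:ℝ) 1) (g p) := by
  have hp : p ≠ 0 := by linarith
  set ℓ : ℝ →ₗ[ℝ] ℝ := LinearMap.mulLeft ℝ (gt' p p / p)
  set ψ : ℝ → ℝ := fun q => gt' p q - ℓ q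
  have hψ : ConvexOn ℝ (Icc p 1) ψ :=
    ((convexOn_gt' hp1 (by linarith)).subset (fun q hq => by simp only [mem_Iio]; linarith [hq.2])
      (convex_Icc p 1)).sub (ℓ.concaveOn (convex_Icc p 1))
  have hmin : IsMinOn ψ (Icc p 1) p := fun q hq => by
    simp only [ψ, ℓ, LinearMap.mulLeft_apply, div_mul_cancel₀ _ hp, sub_self]
    exact sub_nonneg.2 (div_mul_le_gt' hp1 hp2 hq.1 (by linarith [hq.2]))
  have hg : g p = ℓ + fun q => ψ (max q p) := by
    funext q
    simp only [g, Pi.add_apply, ψ, ℓ, LinearMap.mulLeft_apply]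
    split_ifs with hq
    · rw [max_eq_right hq, div_mul_cancel₀ _ hp]
      ring
    · rw [max_eq_left (not_le.1 hq).le]
      ring
  rw [hg]
  exact (ℓ.convexOn (convex_Icc 0 1)).add (hψ.comp_max_of_isMinOn hmin (by linarith) hp2)
end

section
/- Let E ⊆ [0,1) be measurable, let J ⊆ [0,1) be an interval with left half J_l and right half J_r (each of length |J|/2), and set q1 = |J_l ∩ E|/|J_l|, q2 = |J_r ∩ E|/|J_r|. Let 2/3 < p ≤ 1 and define g as above. Define the weight w' to equal g(q1)/q1 on J_l and g(q2)/q2 on J_r (when the denominators are positive), and w = g((q1+q2)/2)/((q1+q2)/2) on J. Then for the Haar function h_J (equal to -1 on J_l and +1 on J_r) and all reals a, b such that (q1+q2)/2 ≥ p whenever b ≠ 0: ∫_{E∩J} (b + a h_J)^2 w' dx - ∫_{E∩J} b^2 w dx ≥ ∫_{E∩J} (a h_J)^2 dx. -/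
open MeasureTheory

lemma lin_eq (p q : ℝ) (hp1 : 2 / 3 < p) : gt' p p * q / p = 2 * q / (3 * p - 2) := by
  have hs : (0:ℝ) < 3 * p - 2 := by linarith
  have hp : (0:ℝ) < p := by linarith
  unfold gt'
  rw [show (3 * p - 2) * (3 * p - 2 * p) = (3 * p - 2) * p by ring]
  rw [mul_comm (3 * p - 2) p, mul_div_mul_left _ _ hp.ne', one_add_div hs.ne', div_mul_eq_mul_div, div_div, div_eq_div_iff (mul_pos hs hp).ne' hs.ne']
  ring

lemma lemA (p q : ℝ) (hp1 : 2 / 3 < p) (hp2 : p ≤ 1) (h1 : 2 * p - 1 ≤ q) (h2 : q ≤ p) :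
    gt' p q ≤ gt' p p * q / p := by
  have hs : (0:ℝ) < 3 * p - 2 := by linarith
  have hp : (0:ℝ) < p := by linarith
  have ht : (0:ℝ) < 3 * p - 2 * q := by linarith
  rw [lin_eq p q hp1]
  unfold gt'
  rw [show (1:ℝ) + p * (2 - p) / ((3 * p - 2) * (3 * p - 2 * q))
      = ((3 * p - 2) * (3 * p - 2 * q) + p * (2 - p)) / ((3 * p - 2) * (3 * p - 2 * q)) by
    rw [add_div, div_self (mul_pos hs ht).ne']]
  rw [div_le_div_iff₀ (by positivity) hs]
  nlinarith [mul_nonneg (sub_nonneg.2 h2) (by linarith : (0:ℝ) ≤ q - (2 * p - 1))]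

lemma lemB (u v x y : ℝ) (hu : 0 < u) (hv : 0 < v) :
    (x + y)^2 / (u + v) ≤ x^2 / u + y^2 / v := by
  rw [div_add_div _ _ hu.ne' hv.ne', div_le_div_iff₀ (by positivity) (by positivity)]
  nlinarith [sq_nonneg (x * v - y * u)]

lemma g_ge_self (p q : ℝ) (hp1 : 2 / 3 < p) (hp2 : p ≤ 1) (h0 : 0 ≤ q) (h1 : q ≤ 1) :
    q ≤ g p q := by
  have hs : (0:ℝ) < 3 * p - 2 := by linarith
  have hp : (0:ℝ) < p := by linarith
  unfold g
  split_ifs with hqp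
  · rw [lin_eq p q hp1]
    rw [le_div_iff₀ hs]
    nlinarith
  · unfold gt'
    have ht : (0:ℝ) < 3 * p - 2 * q := by linarith
    have : 0 ≤ p * (2 - p) / ((3 * p - 2) * (3 * p - 2 * q)) := by
      apply div_nonneg <;> nlinarith
    linarith

lemma g_ge_gt' (p q q' : ℝ) (hp1 : 2 / 3 < p) (hp2 : p ≤ 1) (h0 : 0 ≤ q)
    (h1 : q' ≤ 1) (hsum : 2 * p ≤ q + q') : gt' p q ≤ g p q := by
  unfold g
  split_ifs with hqp
  · exact lemA p q hp1 hp2 (by linarith) hqp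
  · exact le_refl _

lemma coreCS (p q1 q2 a b : ℝ) (hp1 : 2 / 3 < p) (hp2 : p ≤ 1)
    (h11 : q1 ≤ 1) (h21 : q2 ≤ 1) :
    2 * b^2 * gt' p ((q1 + q2) / 2) + 2 * a^2 * 1
      ≤ (b - a)^2 * gt' p q1 + (b + a)^2 * gt' p q2 := by
  have hs : (0:ℝ) < 3 * p - 2 := by linarith
  have hu : (0:ℝ) < 3 * p - 2 * q1 := by linarith
  have hv : (0:ℝ) < 3 * p - 2 * q2 := by linarith
  have hc : (0:ℝ) ≤ p * (2 - p) := by nlinarith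
  have e1 : gt' p q1 = 1 + p * (2 - p) * ((3 * p - 2)⁻¹ * (3 * p - 2 * q1)⁻¹) := by
    unfold gt'; rw [div_eq_mul_inv, mul_inv]
  have e2 : gt' p q2 = 1 + p * (2 - p) * ((3 * p - 2)⁻¹ * (3 * p - 2 * q2)⁻¹) := by
    unfold gt'; rw [div_eq_mul_inv, mul_inv]
  have e3 : gt' p ((q1 + q2) / 2)
      = 1 + p * (2 - p) * ((3 * p - 2)⁻¹ * ((3 * p - 2 * q1) + (3 * p - 2 * q2))⁻¹ * 2) := by
    unfold gt'
    rw [show 3 * p - 2 * ((q1 + q2) / 2) = ((3 * p - 2 * q1) + (3 * p - 2 * q2)) / 2 by ring]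
    have hS : (3 * p - 2 * q1) + (3 * p - 2 * q2) ≠ 0 := by positivity
    field_simp
  have cs := lemB (3 * p - 2 * q1) (3 * p - 2 * q2) (b - a) (b + a) hu hv
  rw [show b - a + (b + a) = 2 * b by ring] at cs
  rw [e1, e2, e3]
  have hsinv : (0:ℝ) ≤ (3 * p - 2)⁻¹ := by positivity
  have key : (2*b)^2 * ((3 * p - 2 * q1) + (3 * p - 2 * q2))⁻¹
      ≤ (b - a)^2 * (3 * p - 2 * q1)⁻¹ + (b + a)^2 * (3 * p - 2 * q2)⁻¹ := by
    rw [← div_eq_mul_inv, ← div_eq_mul_inv, ← div_eq_mul_inv]; exact cs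
  nlinarith [mul_nonneg (mul_nonneg hc hsinv) (sub_nonneg.2 key)]

lemma core (p q1 q2 a b : ℝ) (hp1 : 2 / 3 < p) (hp2 : p ≤ 1)
    (h10 : 0 ≤ q1) (h11 : q1 ≤ 1) (h20 : 0 ≤ q2) (h21 : q2 ≤ 1)
    (hb : b ≠ 0 → (q1 + q2) / 2 ≥ p) :
    2 * b^2 * g p ((q1 + q2) / 2) + 2 * a^2 * ((q1 + q2) / 2)
      ≤ (b - a)^2 * g p q1 + (b + a)^2 * g p q2 := by
  by_cases hb0 : b = 0
  · subst hb0
    have g1 := g_ge_self p q1 hp1 hp2 h10 h11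
    have g2 := g_ge_self p q2 hp1 hp2 h20 h21
    nlinarith [sq_nonneg a]
  · have hqb := hb hb0
    have hsum : 2 * p ≤ q1 + q2 := by linarith
    have d1 : gt' p q1 ≤ g p q1 := g_ge_gt' p q1 q2 hp1 hp2 h10 h21 hsum
    have d2 : gt' p q2 ≤ g p q2 := g_ge_gt' p q2 q1 hp1 hp2 h20 h11 (by linarith)
    have dqb : g p ((q1 + q2) / 2) ≤ gt' p ((q1 + q2) / 2) := by
      unfold g
      split_ifs with hqp
      · have heq : (q1 + q2) / 2 = p := le_antisymm hqp hqb
        rw [heq, mul_div_assoc, div_self (by linarith : p ≠ 0), mul_one]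
      · exact le_refl _
    have hCS := coreCS p q1 q2 a b hp1 hp2 h11 h21
    have hqb1 : (q1 + q2) / 2 ≤ 1 := by linarith
    nlinarith [sq_nonneg (b - a), sq_nonneg (b + a), sq_nonneg a, sq_nonneg b,
      mul_le_mul_of_nonneg_left d1 (sq_nonneg (b - a)),
      mul_le_mul_of_nonneg_left d2 (sq_nonneg (b + a)),
      mul_le_mul_of_nonneg_left dqb (by positivity : (0:ℝ) ≤ 2 * b^2),
      mul_le_mul_of_nonneg_left hqb1 (by positivity : (0:ℝ) ≤ 2 * a^2)]

lemma g_zero (p : ℝ) (hp1 : 2 / 3 < p) : g p 0 = 0 := by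
  unfold g
  rw [if_pos (by linarith : (0:ℝ) ≤ p)]
  simp

lemma arith_final (L V a b G1 G2 Gb qb : ℝ) (hL : 0 < L) (hV1 : V ≤ 1) (hGb : 0 ≤ Gb)
    (hcore : 2 * b^2 * Gb + 2 * a^2 * qb ≤ (b - a)^2 * G1 + (b + a)^2 * G2)
    (hVeq : V = 2 * L * qb) :
    V * a^2 ≤ L * ((b - a)^2 * G1) + L * ((b + a)^2 * G2) - V * (L * (2 * b^2 * Gb)) := by
  nlinarith [mul_le_mul_of_nonneg_left hcore hL.le,
    mul_nonneg (mul_nonneg (mul_nonneg hL.le (by positivity : (0:ℝ) ≤ 2 * b^2)) hGb)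
      (by linarith : (0:ℝ) ≤ 1 - V)]

theorem stmt_11 (p : ℝ) (hp1 : 2 / 3 < p) (hp2 : p ≤ 1)
    (E : Set ℝ) (hE : MeasurableSet E) (hEsub : E ⊆ Set.Ico (0:ℝ) 1)
    (α β : ℝ) (hαβ : α < β) (hJ : Set.Ico α β ⊆ Set.Ico (0:ℝ) 1)
    -- the two halves of `J = [α, β)` and the relative masses of `E` on them
    (q1 q2 : ℝ)
    (hq1 : q1 = (volume (Set.Ico α ((α + β) / 2) ∩ E)).toReal / ((β - α) / 2))
    (hq2 : q2 = (volume (Set.Ico ((α + β) / 2) β ∩ E)).toReal / ((β - α) / 2))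
    -- the Haar function of `J`, `-1` on the left half and `+1` on the right half
    (h : ℝ → ℝ) (hh : h = fun x => if x < (α + β) / 2 then (-1 : ℝ) else 1)
    -- the weights
    (w' : ℝ → ℝ) (hw' : w' = fun x => if x < (α + β) / 2 then g p q1 / q1 else g p q2 / q2)
    (w : ℝ → ℝ) (hw : w = fun _ => g p ((q1 + q2) / 2) / ((q1 + q2) / 2))
    (a b : ℝ) (hb : b ≠ 0 → (q1 + q2) / 2 ≥ p) :
    ∫ x in E ∩ Set.Ico α β, (b + a * h x)^2 * w' x
      - ∫ x in E ∩ Set.Ico α β, b^2 * w x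
      ≥ ∫ x in E ∩ Set.Ico α β, (a * h x)^2 := by
  set m : ℝ := (α + β) / 2 with hm
  have hαm : α < m := by rw [hm]; linarith
  have hmβ : m < β := by rw [hm]; linarith
  set L : ℝ := (β - α) / 2 with hL
  have hLpos : (0:ℝ) < L := by rw [hL]; linarith
  set SL : Set ℝ := E ∩ Set.Ico α m with hSLdef
  set SR : Set ℝ := E ∩ Set.Ico m β with hSRdef
  have hSL : MeasurableSet SL := hE.inter measurableSet_Ico
  have hSR : MeasurableSet SR := hE.inter measurableSet_Ico
  have hunion : E ∩ Set.Ico α β = SL ∪ SR := by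
    rw [hSLdef, hSRdef, ← Set.inter_union_distrib_left,
      Set.Ico_union_Ico_eq_Ico hαm.le hmβ.le]
  have hdisj : Disjoint SL SR :=
    (Set.Ico_disjoint_Ico_same).mono Set.inter_subset_right Set.inter_subset_right
  have hfinL : volume SL < ⊤ :=
    lt_of_le_of_lt (measure_mono Set.inter_subset_right) (by simp [Real.volume_Ico])
  have hfinR : volume SR < ⊤ :=
    lt_of_le_of_lt (measure_mono Set.inter_subset_right) (by simp [Real.volume_Ico])
  have hvL : (volume SL).toReal = q1 * L := by
    rw [hq1, div_mul_cancel₀ _ (by positivity : ((β - α) / 2) ≠ 0)]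
    rw [hSLdef, Set.inter_comm]
  have hvR : (volume SR).toReal = q2 * L := by
    rw [hq2, div_mul_cancel₀ _ (by positivity : ((β - α) / 2) ≠ 0)]
    rw [hSRdef, Set.inter_comm]
  have hq10 : 0 ≤ q1 := by rw [hq1]; positivity
  have hq20 : 0 ≤ q2 := by rw [hq2]; positivity
  have hq11 : q1 ≤ 1 := by
    rw [hq1, div_le_one (by positivity)]
    have hmono : volume (Set.Ico α m ∩ E) ≤ volume (Set.Ico α m) :=
      measure_mono Set.inter_subset_left
    rw [Real.volume_Ico] at hmono
    calc (volume (Set.Ico α m ∩ E)).toReal ≤ (ENNReal.ofReal (m - α)).toReal :=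
          ENNReal.toReal_mono ENNReal.ofReal_ne_top hmono
      _ = m - α := ENNReal.toReal_ofReal (by linarith)
      _ = (β - α) / 2 := by rw [hm]; ring
  have hq21 : q2 ≤ 1 := by
    rw [hq2, div_le_one (by positivity)]
    have hmono : volume (Set.Ico m β ∩ E) ≤ volume (Set.Ico m β) :=
      measure_mono Set.inter_subset_left
    rw [Real.volume_Ico] at hmono
    calc (volume (Set.Ico m β ∩ E)).toReal ≤ (ENNReal.ofReal (β - m)).toReal :=
          ENNReal.toReal_mono ENNReal.ofReal_ne_top hmono
      _ = β - m := ENNReal.toReal_ofReal (by linarith)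
      _ = (β - α) / 2 := by rw [hm]; ring
  have hconstL : ∀ x ∈ SL, (b + a * h x)^2 * w' x = (b - a)^2 * (g p q1 / q1) := by
    intro x hx
    have hxm : x < m := hx.2.2
    simp only [hh, hw', if_pos hxm]
    ring
  have hconstR : ∀ x ∈ SR, (b + a * h x)^2 * w' x = (b + a)^2 * (g p q2 / q2) := by
    intro x hx
    have hxm : ¬ (x < m) := not_lt.2 hx.2.1
    simp only [hh, hw', if_neg hxm]
    ring
  have hintL : IntegrableOn (fun x => (b + a * h x)^2 * w' x) SL volume := by
    apply (integrableOn_const (C := (b - a)^2 * (g p q1 / q1)) hfinL.ne).congr_fun (fun x hx => (hconstL x hx).symm) hSL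
  have hintR : IntegrableOn (fun x => (b + a * h x)^2 * w' x) SR volume := by
    apply (integrableOn_const (C := (b + a)^2 * (g p q2 / q2)) hfinR.ne).congr_fun (fun x hx => (hconstR x hx).symm) hSR
  have I1 : ∫ x in E ∩ Set.Ico α β, (b + a * h x)^2 * w' x
      = q1 * L * ((b - a)^2 * (g p q1 / q1)) + q2 * L * ((b + a)^2 * (g p q2 / q2)) := by
    rw [hunion, setIntegral_union hdisj hSR hintL hintR,
      setIntegral_congr_fun hSL hconstL, setIntegral_congr_fun hSR hconstR,
      setIntegral_const, setIntegral_const, measureReal_def, measureReal_def, hvL, hvR, smul_eq_mul, smul_eq_mul]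
  have hfinS : volume (E ∩ Set.Ico α β) < ⊤ := by
    rw [hunion]
    exact lt_of_le_of_lt (measure_union_le _ _) (ENNReal.add_lt_top.2 ⟨hfinL, hfinR⟩)
  have hvS : (volume (E ∩ Set.Ico α β)).toReal = q1 * L + q2 * L := by
    rw [hunion, measure_union hdisj hSR, ENNReal.toReal_add hfinL.ne hfinR.ne, hvL, hvR]
  have I2 : ∫ x in E ∩ Set.Ico α β, b^2 * w x
      = (q1 * L + q2 * L) * (b^2 * (g p ((q1 + q2) / 2) / ((q1 + q2) / 2))) := by
    rw [hw]
    rw [setIntegral_const, measureReal_def, hvS, smul_eq_mul]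
  have hconstH : ∀ x ∈ E ∩ Set.Ico α β, (a * h x)^2 = a^2 := by
    intro x _
    simp only [hh]
    split_ifs <;> ring
  have I3 : ∫ x in E ∩ Set.Ico α β, (a * h x)^2 = (q1 * L + q2 * L) * a^2 := by
    rw [setIntegral_congr_fun (hE.inter measurableSet_Ico) hconstH, setIntegral_const, measureReal_def, hvS,
      smul_eq_mul]
  have hintF : IntegrableOn (fun x => (b + a * h x)^2 * w' x) (E ∩ Set.Ico α β) volume := by
    rw [hunion]; exact hintL.union hintR
  have hsplit : ∫ x in E ∩ Set.Ico α β,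
        ((b + a * h x)^2 * w' x - ∫ y in E ∩ Set.Ico α β, b^2 * w y)
      = (∫ x in E ∩ Set.Ico α β, (b + a * h x)^2 * w' x)
        - (q1 * L + q2 * L) * ∫ y in E ∩ Set.Ico α β, b^2 * w y := by
    rw [integral_sub hintF (integrableOn_const hfinS.ne), setIntegral_const, measureReal_def, hvS,
      smul_eq_mul]
  rw [ge_iff_le, I3, hsplit, I1, I2]
  have e1 : q1 * L * ((b - a)^2 * (g p q1 / q1)) = L * ((b - a)^2 * g p q1) := by
    rcases eq_or_lt_of_le hq10 with hq | hq
    · rw [← hq, g_zero p hp1]; simp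
    · rw [div_eq_mul_inv]
      calc q1 * L * ((b - a)^2 * (g p q1 * q1⁻¹))
          = (b - a)^2 * g p q1 * L * (q1 * q1⁻¹) := by ring
        _ = L * ((b - a)^2 * g p q1) := by rw [mul_inv_cancel₀ hq.ne']; ring
  have e2 : q2 * L * ((b + a)^2 * (g p q2 / q2)) = L * ((b + a)^2 * g p q2) := by
    rcases eq_or_lt_of_le hq20 with hq | hq
    · rw [← hq, g_zero p hp1]; simp
    · rw [div_eq_mul_inv]
      calc q2 * L * ((b + a)^2 * (g p q2 * q2⁻¹))
          = (b + a)^2 * g p q2 * L * (q2 * q2⁻¹) := by ring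
        _ = L * ((b + a)^2 * g p q2) := by rw [mul_inv_cancel₀ hq.ne']; ring
  have e3 : (q1 * L + q2 * L) * (b^2 * (g p ((q1 + q2) / 2) / ((q1 + q2) / 2)))
      = L * (2 * b^2 * g p ((q1 + q2) / 2)) := by
    rcases eq_or_lt_of_le (by linarith : (0:ℝ) ≤ (q1 + q2) / 2) with hq | hq
    · rw [← hq, g_zero p hp1]
      have hq1z : q1 = 0 := by linarith
      have hq2z : q2 = 0 := by linarith
      simp [hq1z, hq2z]
    · rw [div_eq_mul_inv]
      calc (q1 * L + q2 * L) * (b^2 * (g p ((q1 + q2) / 2) * ((q1 + q2) / 2)⁻¹))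
          = 2 * b^2 * g p ((q1 + q2) / 2) * L * ((q1 + q2) / 2 * ((q1 + q2) / 2)⁻¹) := by ring
        _ = L * (2 * b^2 * g p ((q1 + q2) / 2)) := by rw [mul_inv_cancel₀ hq.ne']; ring
  rw [e1, e2, e3]
  have hα0 : (0:ℝ) ≤ α := (hJ ⟨le_refl α, hαβ⟩).1
  have hβ1 : β ≤ 1 := by
    by_contra hc
    push_neg at hc
    have hmem : max α 1 ∈ Set.Ico α β := ⟨le_max_left _ _, max_lt hαβ hc⟩
    have h2 := (hJ hmem).2
    have h1 : (1:ℝ) ≤ max α 1 := le_max_right _ _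
    linarith
  have hV1 : q1 * L + q2 * L ≤ 1 := by
    have e1' : q1 * L ≤ L := by
      calc q1 * L ≤ 1 * L := mul_le_mul_of_nonneg_right hq11 hLpos.le
        _ = L := one_mul L
    have e2' : q2 * L ≤ L := by
      calc q2 * L ≤ 1 * L := mul_le_mul_of_nonneg_right hq21 hLpos.le
        _ = L := one_mul L
    have e3' : 2 * L ≤ 1 := by rw [hL]; linarith
    linarith
  have hgqb : 0 ≤ g p ((q1 + q2) / 2) :=
    le_trans (by linarith) (g_ge_self p ((q1 + q2) / 2) hp1 hp2 (by linarith) (by linarith))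
  have hcore := core p q1 q2 a b hp1 hp2 hq10 hq11 hq20 hq21 hb
  set_option maxHeartbeats 2000000 in
  exact arith_final L (q1 * L + q2 * L) a b (g p q1) (g p q2) (g p ((q1 + q2) / 2))
    ((q1 + q2) / 2) hLpos hV1 hgqb hcore (by ring)
end
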